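/- Let n ≥ 2 and let B ⊆ (ZMod n)^n be a set of exactly n² vectors with the plane code property. Then for every index j ∈ Fin n and every value z ∈ ZMod n, exactly n vectors b ∈ B satisfy b_j = z. -/

import Mathlib

/-- The number of coordinates where two vectors in `(ZMod n)^n` agree,
i.e. the number of coordinates of `b - b'` equal to `0`. -/
def agreeCount {n : ℕ} (b b' : Fin n → ZMod n) : ℕ :=
  (Finset.univ.filter fun i => b i - b' i = 0).card

/-- `B` has the plane code property: any two distinct elements of `B`
agree in at most one coordinate. -/
def PlaneCode {n : ℕ} (B : Finset (Fin n → ZMod n)) : Prop :=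
  ∀ b ∈ B, ∀ b' ∈ B, b ≠ b' → agreeCount b b' ≤ 1

/-! Two coordinates determine a codeword, so fixing `b j` leaves at most `n` choices (one per value
of another coordinate `b k`). As the `n` fibres of `b ↦ b j` partition the `n²` codewords, none can
be smaller than `n`. -/

open Finset

theorem Finset.card_filter_eq_of_forall_card_filter_le {α β : Type*} [Fintype β] [DecidableEq β]
    {s : Finset α} {f : α → β} {m : ℕ} (hle : ∀ y, #(s.filter (f · = y)) ≤ m)
    (hs : #s = Fintype.card β * m) (y : β) : #(s.filter (f · = y)) = m := by
  have hsum : ∑ y' : β, #(s.filter (f · = y')) = ∑ _y' : β, m := by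
    rw [← card_eq_sum_card_fiberwise fun a _ => mem_univ (f a), hs, sum_const, card_univ,
      smul_eq_mul]
  exact (sum_eq_sum_iff_of_le fun y' _ => hle y').1 hsum y (mem_univ y)

theorem two_le_agreeCount {n : ℕ} {b b' : Fin n → ZMod n} {j k : Fin n} (hjk : j ≠ k)
    (hj : b j = b' j) (hk : b k = b' k) : 2 ≤ agreeCount b b' := by
  have hsub : {j, k} ⊆ univ.filter fun i => b i - b' i = 0 := by
    simp [insert_subset_iff, sub_eq_zero, hj, hk]
  calc 2 = #{j, k} := (card_pair hjk).symm
    _ ≤ agreeCount b b' := card_le_card hsub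

namespace PlaneCode

variable {n : ℕ} {B : Finset (Fin n → ZMod n)}

theorem eq_of_apply_eq_of_apply_eq (hB : PlaneCode B) {b b' : Fin n → ZMod n} (hb : b ∈ B)
    (hb' : b' ∈ B) {j k : Fin n} (hjk : j ≠ k) (hj : b j = b' j) (hk : b k = b' k) : b = b' := by
  by_contra hne
  exact (two_le_agreeCount hjk hj hk).not_gt (Nat.lt_succ_of_le (hB b hb b' hb' hne))

theorem card_filter_apply_eq_le [NeZero n] (hB : PlaneCode B) {j k : Fin n} (hjk : j ≠ k)
    (w : ZMod n) : #(B.filter fun b => b j = w) ≤ n := by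
  calc #(B.filter fun b => b j = w) ≤ #(univ : Finset (ZMod n)) :=
        card_le_card_of_injOn (· k) (fun _ _ => mem_coe.2 (mem_univ _))
          fun b hb b' hb' hbk => by
            obtain ⟨hbB, hbj⟩ := mem_filter.1 (mem_coe.1 hb)
            obtain ⟨hbB', hbj'⟩ := mem_filter.1 (mem_coe.1 hb')
            exact hB.eq_of_apply_eq_of_apply_eq hbB hbB' hjk (hbj.trans hbj'.symm) hbk
    _ = n := by rw [card_univ, ZMod.card]

end PlaneCode

theorem plane_code_coordinate_count (n : ℕ) (hn : 2 ≤ n)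
    (B : Finset (Fin n → ZMod n)) (hcard : B.card = n ^ 2) (hB : PlaneCode B)
    (j : Fin n) (z : ZMod n) :
    (B.filter fun b => b j = z).card = n := by
  have : NeZero n := ⟨by omega⟩
  have : Nontrivial (Fin n) := Fin.nontrivial_iff_two_le.mpr hn
  obtain ⟨k, hkj⟩ := exists_ne j
  refine card_filter_eq_of_forall_card_filter_le (hB.card_filter_apply_eq_le hkj.symm) ?_ z
  rw [hcard, ZMod.card, sq]
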